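/- The dihedral-type presented group with generators a_i for i ∈ ℤ/e and relations a_i a_{i-1} = a_j a_{j-1} for all i, j ∈ ℤ/e is isomorphic to the group with presentation ⟨a, b | ⟨ab⟩^e = ⟨ba⟩^e⟩ (the Artin group of type I_2(e)). -/
import Mathlib


/-- The alternating product `⟨ab⟩^e = a b a b ⋯` with `e` factors. -/
def altProd {G : Type*} [Monoid G] (a b : G) : ℕ → G
  | 0 => 1
  | n + 1 => a * altProd b a n

/-- Relators of the circle presentation: `a_i a_{i-1} = a_j a_{j-1}` for `i, j ∈ ℤ/e`. -/
def circleRels (e : ℕ) : Set (FreeGroup (ZMod e)) :=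
  { w | ∃ i j : ZMod e,
      w = FreeGroup.of i * FreeGroup.of (i - 1) * (FreeGroup.of j * FreeGroup.of (j - 1))⁻¹ }

/-- Relator of the Artin presentation of type `I₂(e)`: `⟨ab⟩^e = ⟨ba⟩^e`. -/
def dihedralArtinRels (e : ℕ) : Set (FreeGroup Bool) :=
  { w | w = altProd (FreeGroup.of true) (FreeGroup.of false) e *
        (altProd (FreeGroup.of false) (FreeGroup.of true) e)⁻¹ }

/-- The sequence `x 0 = b`, `x 1 = a`, `x (n+2) = x (n+1) * x n * (x (n+1))⁻¹`. -/
def circSeq {G : Type*} [Group G] (a b : G) : ℕ → G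
  | 0 => b
  | 1 => a
  | n + 2 => circSeq a b (n + 1) * circSeq a b n * (circSeq a b (n + 1))⁻¹

section Lemmas

variable {G H : Type*} [Group G] [Group H] (a b : G)

lemma circSeq_mul (n : ℕ) : circSeq a b (n + 1) * circSeq a b n = a * b := by
  induction n with
  | zero => rfl
  | succ n ih =>
    show circSeq a b (n + 1) * circSeq a b n * (circSeq a b (n + 1))⁻¹ *
        circSeq a b (n + 1) = a * b
    rw [inv_mul_cancel_right]
    exact ih

lemma altProd_add_two (n : ℕ) : altProd a b (n + 2) = a * b * altProd a b n := by
  show a * (b * altProd a b n) = _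
  rw [mul_assoc]

lemma altProd_eq_circSeq (n : ℕ) :
    altProd a b (n + 1) = circSeq a b (n + 1) * altProd a b n := by
  induction n using Nat.twoStepInduction with
  | zero => show a * 1 = a * 1; rfl
  | one =>
    show a * (b * 1) = a * b * a⁻¹ * (a * 1)
    group
  | more n ih _ =>
    rw [altProd_add_two, altProd_add_two, ih]
    have h1 : a * b = circSeq a b (n + 2) * circSeq a b (n + 1) := (circSeq_mul a b (n + 1)).symm
    have h3 : circSeq a b (n + 3) =
        circSeq a b (n + 2) * circSeq a b (n + 1) * (circSeq a b (n + 2))⁻¹ := rfl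
    rw [h1, h3]
    group

lemma map_altProd (f : G →* H) (n : ℕ) : f (altProd a b n) = altProd (f a) (f b) n := by
  induction n generalizing a b with
  | zero => exact f.map_one
  | succ n ih => show f (a * altProd b a n) = f a * altProd (f b) (f a) n; rw [f.map_mul, ih]

lemma map_circSeq (f : G →* H) (n : ℕ) : f (circSeq a b n) = circSeq (f a) (f b) n := by
  induction n using Nat.twoStepInduction with
  | zero => rfl
  | one => rfl
  | more n ih1 ih2 =>
    show f (circSeq a b (n+1) * circSeq a b n * (circSeq a b (n+1))⁻¹) = _
    rw [f.map_mul, f.map_mul, f.map_inv, ih1, ih2]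
    rfl

end Lemmas

section Main

variable (e : ℕ)

/-- Generators of the circle presented group. -/
noncomputable abbrev cGen (i : ZMod e) : PresentedGroup (circleRels e) := PresentedGroup.of i

lemma cGen_rel (i j : ZMod e) : cGen e i * cGen e (i - 1) = cGen e j * cGen e (j - 1) := by
  have h : PresentedGroup.mk (circleRels e)
      (FreeGroup.of i * FreeGroup.of (i - 1) * (FreeGroup.of j * FreeGroup.of (j - 1))⁻¹) = 1 := by
    apply (QuotientGroup.eq_one_iff _).mpr
    exact Subgroup.subset_normalClosure ⟨i, j, rfl⟩
  rw [map_mul, map_inv, map_mul, map_mul] at h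
  exact mul_inv_eq_one.mp h

lemma circSeq_cGen (n : ℕ) : circSeq (cGen e 1) (cGen e 0) n = cGen e (n : ZMod e) := by
  induction n using Nat.twoStepInduction with
  | zero => show cGen e 0 = cGen e ((0 : ℕ) : ZMod e); norm_cast
  | one => show cGen e 1 = cGen e ((1 : ℕ) : ZMod e); norm_cast
  | more n ih1 ih2 =>
    show circSeq _ _ (n+1) * circSeq _ _ n * (circSeq _ _ (n+1))⁻¹ = _
    rw [ih2, ih1]
    have h := cGen_rel e ((n : ZMod e) + 2) ((n : ZMod e) + 1)
    have h1 : ((n : ZMod e) + 2) - 1 = (n : ZMod e) + 1 := by ring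
    have h2 : ((n : ZMod e) + 1) - 1 = (n : ZMod e) := by ring
    rw [h1, h2] at h
    have g1 : ((n + 1 : ℕ) : ZMod e) = (n : ZMod e) + 1 := by push_cast; ring
    have g2 : ((n + 2 : ℕ) : ZMod e) = (n : ZMod e) + 2 := by push_cast; ring
    rw [g1, g2, ← h]
    group

/-- Generators of the Artin presented group. -/
noncomputable abbrev aGen : PresentedGroup (dihedralArtinRels e) := PresentedGroup.of true

noncomputable abbrev bGen : PresentedGroup (dihedralArtinRels e) := PresentedGroup.of false

lemma artin_rel : altProd (aGen e) (bGen e) e = altProd (bGen e) (aGen e) e := by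
  have h : PresentedGroup.mk (dihedralArtinRels e)
      (altProd (FreeGroup.of true) (FreeGroup.of false) e *
        (altProd (FreeGroup.of false) (FreeGroup.of true) e)⁻¹) = 1 := by
    apply (QuotientGroup.eq_one_iff _).mpr
    exact Subgroup.subset_normalClosure rfl
  rw [map_mul, map_inv, map_altProd, map_altProd] at h
  exact mul_inv_eq_one.mp h

lemma circSeq_e (he : 1 ≤ e) : circSeq (aGen e) (bGen e) e = bGen e := by
  obtain ⟨m, rfl⟩ := Nat.exists_eq_add_of_le he
  rw [add_comm] at *
  have h1 := altProd_eq_circSeq (aGen (m+1)) (bGen (m+1)) m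
  have h2 := artin_rel (m + 1)
  have h3 : altProd (bGen (m+1)) (aGen (m+1)) (m + 1) =
      bGen (m+1) * altProd (aGen (m+1)) (bGen (m+1)) m := rfl
  rw [h1, h3] at h2
  exact mul_right_cancel h2

lemma circSeq_val_mul (he : 1 ≤ e) (i : ZMod e) :
    circSeq (aGen e) (bGen e) i.val * circSeq (aGen e) (bGen e) (i - 1).val =
      aGen e * bGen e := by
  haveI : NeZero e := ⟨by omega⟩
  by_cases hi : i = 0
  · subst hi
    obtain ⟨m, rfl⟩ := Nat.exists_eq_add_of_le he
    rw [add_comm] at *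
    have hv : ((0 : ZMod (m+1)) - 1).val = m := by
      rw [zero_sub]; exact ZMod.val_neg_one m
    rw [hv, ZMod.val_zero]
    have : circSeq (aGen (m+1)) (bGen (m+1)) 0 = circSeq (aGen (m+1)) (bGen (m+1)) (m + 1) :=
      (circSeq_e (m+1) he).symm
    rw [this]
    exact circSeq_mul _ _ m
  · have hv : 1 ≤ i.val := by
      rcases Nat.eq_zero_or_pos i.val with h | h
      · exact absurd ((ZMod.val_eq_zero i).mp h) hi
      · exact h
    obtain ⟨k, hk⟩ := Nat.exists_eq_add_of_le hv
    rw [add_comm] at hk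
    have hklt : k < e := by have := ZMod.val_lt i; omega
    have hi' : i = ((k + 1 : ℕ) : ZMod e) := by rw [← hk, ZMod.natCast_zmod_val]
    have hsub : (i - 1).val = k := by
      rw [hi']; push_cast; rw [add_sub_cancel_right, ZMod.val_cast_of_lt hklt]
    rw [hk, hsub]
    exact circSeq_mul _ _ k

/-- The forward homomorphism. -/
noncomputable def circToArtin (he : 1 ≤ e) :
    PresentedGroup (circleRels e) →* PresentedGroup (dihedralArtinRels e) :=
  PresentedGroup.toGroup (f := fun i : ZMod e => circSeq (aGen e) (bGen e) i.val) <| by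
    rintro r ⟨i, j, rfl⟩
    simp only [map_mul, map_inv, FreeGroup.lift_apply_of]
    rw [circSeq_val_mul e he i, circSeq_val_mul e he j, mul_inv_cancel]

/-- The backward homomorphism. -/
noncomputable def artinToCirc :
    PresentedGroup (dihedralArtinRels e) →* PresentedGroup (circleRels e) :=
  PresentedGroup.toGroup (f := fun t : Bool => Bool.rec (cGen e 0) (cGen e 1) t) <| by
    rintro r rfl
    simp only [map_mul, map_inv, map_altProd, FreeGroup.lift_apply_of]
    rw [mul_inv_eq_one]
    cases e with
    | zero =>
      rfl
    | succ m =>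
      rw [altProd_eq_circSeq, circSeq_cGen]
      have h3 : altProd (cGen (m+1) 0) (cGen (m+1) 1) (m + 1) =
          cGen (m+1) 0 * altProd (cGen (m+1) 1) (cGen (m+1) 0) m := rfl
      rw [h3]
      congr 1
      push_cast
      simp

/-- the circle presentation on `ℤ/e` presents the Artin group of
type `I₂(e)`. -/
theorem circle_presents_dihedral_artin (e : ℕ) (he : 1 ≤ e) :
    Nonempty (PresentedGroup (circleRels e) ≃* PresentedGroup (dihedralArtinRels e)) := by
  haveI : NeZero e := ⟨by omega⟩
  refine ⟨MonoidHom.toMulEquiv (circToArtin e he) (artinToCirc e) ?_ ?_⟩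
  · ext i
    simp only [MonoidHom.comp_apply, MonoidHom.id_apply]
    rw [show (PresentedGroup.of i : PresentedGroup (circleRels e)) = cGen e i from rfl]
    rw [circToArtin]
    rw [PresentedGroup.toGroup.of]
    rw [map_circSeq]
    rw [show (artinToCirc e) (aGen e) = cGen e 1 from PresentedGroup.toGroup.of _,
        show (artinToCirc e) (bGen e) = cGen e 0 from PresentedGroup.toGroup.of _]
    rw [circSeq_cGen, ZMod.natCast_zmod_val]
  · ext t
    simp only [MonoidHom.comp_apply, MonoidHom.id_apply]
    rw [show (PresentedGroup.of t : PresentedGroup (dihedralArtinRels e)) =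
        PresentedGroup.of t from rfl]
    rw [artinToCirc, PresentedGroup.toGroup.of]
    cases t
    · show circToArtin e he (cGen e 0) = bGen e
      rw [circToArtin, PresentedGroup.toGroup.of, ZMod.val_zero]
      rfl
    · show circToArtin e he (cGen e 1) = aGen e
      rw [circToArtin, PresentedGroup.toGroup.of]
      rcases Nat.lt_or_ge 1 e with h | h
      · rw [ZMod.val_one'' (by omega)]
        rfl
      · have he1 : e = 1 := by omega
        subst he1
        have : ((1 : ZMod 1)).val = 0 := rfl
        rw [this]
        show bGen 1 = aGen 1
        have := circSeq_e 1 (le_refl 1)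
        exact this.symm
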